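/- Let a, b, c, d be positive reals, none equal to the sum of the other three, with each less than the sum of the others. Let (θ0, φ0) with θ0 ∈ (0,π) be a zero of F(θ,φ) = a^2 e^{-iθ} + 2ab + b^2 e^{iθ} + c^2 e^{-iφ} + 2cd + d^2 e^{iφ} on the torus, and suppose not both a = b and c = d. Then the ratio F_θ(θ0,φ0)/F_φ(θ0,φ0) of the partial derivatives is not real. -/

import Mathlib

open Complex

/-- The function `F(θ,φ) = a²e^{-iθ} + 2ab + b²e^{iθ} + c²e^{-iφ} + 2cd + d²e^{iφ}`. -/
noncomputable def Fdimer (a b c d θ φ : ℝ) : ℂ :=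
  a ^ 2 * Complex.exp (-θ * Complex.I) + 2 * a * b +
    b ^ 2 * Complex.exp (θ * Complex.I) +
  c ^ 2 * Complex.exp (-φ * Complex.I) + 2 * c * d +
    d ^ 2 * Complex.exp (φ * Complex.I)

/-- The partial derivative `F_θ`. -/
noncomputable def FdimerTheta (a b c d θ φ : ℝ) : ℂ :=
  Complex.I * (-(a ^ 2) * Complex.exp (-θ * Complex.I) +
    b ^ 2 * Complex.exp (θ * Complex.I))

/-- The partial derivative `F_φ`. -/
noncomputable def FdimerPhi (a b c d θ φ : ℝ) : ℂ :=
  Complex.I * (-(c ^ 2) * Complex.exp (-φ * Complex.I) +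
    d ^ 2 * Complex.exp (φ * Complex.I))

/-! With `u = e^{iθ/2}` the `θ`-part of `F` is the square `A² = (a ū + b u)²` and
`F_θ = i A A'` with `A' = b u - a ū`; likewise `F_φ = i B B'` with `v = e^{iφ/2}`.
At a zero `A² + B² = 0`, so `A = ±iB` and the ratio is `±i A'/B'`, real only if
`Re (A' B̄') = 0`. Eliminating `v` with `A = ±iB` turns this into
`Re u · Im u · ((a+b)²(c+d)² - (b-a)²(d-c)²) = 0`, impossible for `θ ∈ (0, π)`. -/

open ComplexConjugate

noncomputable def halfAngleFactor (a b : ℝ) (z : ℂ) : ℂ := a * conj z + b * z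

noncomputable def halfAngleCofactor (a b : ℝ) (z : ℂ) : ℂ := b * z - a * conj z

section Coordinates

variable (a b : ℝ) (z : ℂ)

@[simp] lemma halfAngleFactor_re : (halfAngleFactor a b z).re = (a + b) * z.re := by
  simp [halfAngleFactor]; ring

@[simp] lemma halfAngleFactor_im : (halfAngleFactor a b z).im = (b - a) * z.im := by
  simp [halfAngleFactor]; ring

@[simp] lemma halfAngleCofactor_re : (halfAngleCofactor a b z).re = (b - a) * z.re := by
  simp [halfAngleCofactor]; ring

@[simp] lemma halfAngleCofactor_im : (halfAngleCofactor a b z).im = (a + b) * z.im := by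
  simp [halfAngleCofactor]; ring

lemma halfAngleFactor_neg : halfAngleFactor a b (-z) = -halfAngleFactor a b z := by
  simp [halfAngleFactor]; ring

lemma halfAngleCofactor_neg : halfAngleCofactor a b (-z) = -halfAngleCofactor a b z := by
  simp [halfAngleCofactor]; ring

end Coordinates

section HalfAngle

variable (θ : ℝ)

lemma exp_half_mul_I_sq : exp (θ / 2 * I) ^ 2 = exp (θ * I) := by
  rw [sq, ← exp_add]; ring_nf

lemma conj_exp_half_mul_I : conj (exp (θ / 2 * I)) = exp (-θ / 2 * I) := by
  rw [← exp_conj, map_mul, map_div₀, conj_ofReal, conj_I, map_ofNat]; ring_nf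

lemma conj_exp_half_mul_I_sq : conj (exp (θ / 2 * I)) ^ 2 = exp (-θ * I) := by
  rw [conj_exp_half_mul_I, sq, ← exp_add]; ring_nf

lemma conj_exp_half_mul_I_mul_self : conj (exp (θ / 2 * I)) * exp (θ / 2 * I) = 1 := by
  rw [conj_exp_half_mul_I, ← exp_add]; ring_nf; exact exp_zero

end HalfAngle

section Factorization

variable (a b c d θ φ : ℝ)

lemma Fdimer_eq_add_sq : Fdimer a b c d θ φ =
    halfAngleFactor a b (exp (θ / 2 * I)) ^ 2 + halfAngleFactor c d (exp (φ / 2 * I)) ^ 2 := by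
  simp only [Fdimer, halfAngleFactor, ← exp_half_mul_I_sq, ← conj_exp_half_mul_I_sq]
  linear_combination (-2 * a * b : ℂ) * conj_exp_half_mul_I_mul_self θ
    - (2 * c * d : ℂ) * conj_exp_half_mul_I_mul_self φ

lemma FdimerTheta_eq_mul : FdimerTheta a b c d θ φ =
    I * halfAngleFactor a b (exp (θ / 2 * I)) * halfAngleCofactor a b (exp (θ / 2 * I)) := by
  simp only [FdimerTheta, halfAngleFactor, halfAngleCofactor, ← exp_half_mul_I_sq,
    ← conj_exp_half_mul_I_sq]
  ring

lemma FdimerPhi_eq_mul : FdimerPhi a b c d θ φ =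
    I * halfAngleFactor c d (exp (φ / 2 * I)) * halfAngleCofactor c d (exp (φ / 2 * I)) := by
  simp only [FdimerPhi, halfAngleFactor, halfAngleCofactor, ← exp_half_mul_I_sq,
    ← conj_exp_half_mul_I_sq]
  ring

end Factorization

section Nondegeneracy

variable {a b c d : ℝ} {z w : ℂ}

lemma re_halfAngleCofactor_mul_conj_ne_zero (ha : 0 < a) (hb : 0 < b) (hc : 0 < c) (hd : 0 < d)
    (hz_re : 0 < z.re) (hz_im : 0 < z.im) (h : halfAngleFactor a b z = I * halfAngleFactor c d w) :
    (halfAngleCofactor a b z * conj (halfAngleCofactor c d w)).re ≠ 0 := by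
  have h_re := congrArg re h
  have h_im := congrArg im h
  simp only [halfAngleFactor_re, halfAngleFactor_im, mul_re, mul_im, I_re, I_im] at h_re h_im
  simp only [mul_re, conj_re, conj_im, halfAngleCofactor_re, halfAngleCofactor_im]
  intro h_zero
  have h_gap : (b - a) ^ 2 * (d - c) ^ 2 < (a + b) ^ 2 * (c + d) ^ 2 := by
    nlinarith [mul_pos ha hb, mul_pos hc hd, sq_nonneg (b - a), sq_nonneg (d - c)]
  have h_elim : z.re * z.im * ((a + b) ^ 2 * (c + d) ^ 2 - (b - a) ^ 2 * (d - c) ^ 2) = 0 := by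
    linear_combination (-(c + d) * (d - c)) * h_zero - ((b - a) * (d - c) ^ 2 * z.re) * h_im
      + ((a + b) * (c + d) ^ 2 * z.im) * h_re
  have := mul_pos (mul_pos hz_re hz_im) (sub_pos.2 h_gap)
  linarith

lemma im_div_ne_zero_of_halfAngleFactor_eq_I_mul (ha : 0 < a) (hb : 0 < b) (hc : 0 < c)
    (hd : 0 < d) (hz_re : 0 < z.re) (hz_im : 0 < z.im)
    (h : halfAngleFactor a b z = I * halfAngleFactor c d w) :
    (I * halfAngleFactor a b z * halfAngleCofactor a b z /
      (I * halfAngleFactor c d w * halfAngleCofactor c d w)).im ≠ 0 := by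
  have h_re : 0 < (I * halfAngleFactor c d w).re := by
    rw [← h, halfAngleFactor_re]; positivity
  have hB : halfAngleFactor c d w ≠ 0 := by
    rintro h0; simp [h0] at h_re
  have key := re_halfAngleCofactor_mul_conj_ne_zero ha hb hc hd hz_re hz_im h
  have hB' : halfAngleCofactor c d w ≠ 0 := by
    rintro h0; simp [h0] at key
  have h_ratio : I * halfAngleFactor a b z * halfAngleCofactor a b z /
      (I * halfAngleFactor c d w * halfAngleCofactor c d w) =
      I * (halfAngleCofactor a b z / halfAngleCofactor c d w) := by
    rw [h]; field_simp
  rw [h_ratio, mul_im, I_re, I_im, zero_mul, one_mul, zero_add, div_re, ← add_div]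
  exact div_ne_zero (by simpa using key) (normSq_pos.2 hB').ne'

lemma im_div_ne_zero_of_sq_add_sq_eq_zero (ha : 0 < a) (hb : 0 < b) (hc : 0 < c) (hd : 0 < d)
    (hz_re : 0 < z.re) (hz_im : 0 < z.im)
    (h : halfAngleFactor a b z ^ 2 + halfAngleFactor c d w ^ 2 = 0) :
    (I * halfAngleFactor a b z * halfAngleCofactor a b z /
      (I * halfAngleFactor c d w * halfAngleCofactor c d w)).im ≠ 0 := by
  have h_sq : halfAngleFactor a b z ^ 2 = (I * halfAngleFactor c d w) ^ 2 := by
    linear_combination h - halfAngleFactor c d w ^ 2 * I_sq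
  rcases sq_eq_sq_iff_eq_or_eq_neg.1 h_sq with h | h
  · exact im_div_ne_zero_of_halfAngleFactor_eq_I_mul ha hb hc hd hz_re hz_im h
  · -- `A = -iB` is the case `A = iB` at `-w`, which negates both `B` and `B'`.
    have := im_div_ne_zero_of_halfAngleFactor_eq_I_mul (w := -w) ha hb hc hd hz_re hz_im
      (by rw [halfAngleFactor_neg, h, mul_neg])
    simpa only [halfAngleFactor_neg, halfAngleCofactor_neg, mul_neg, neg_mul, neg_neg] using this

end Nondegeneracy

theorem F_partials_ratio_not_real_general (a b c d θ₀ φ₀ : ℝ)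
    (ha : 0 < a) (hb : 0 < b) (hc : 0 < c) (hd : 0 < d)
    (hθ₀ : θ₀ ∈ Set.Ioo 0 Real.pi)
    (hzero : Fdimer a b c d θ₀ φ₀ = 0) :
    (FdimerTheta a b c d θ₀ φ₀ / FdimerPhi a b c d θ₀ φ₀).im ≠ 0 := by
  obtain ⟨hθ_pos, hθ_lt⟩ := hθ₀
  rw [Fdimer_eq_add_sq] at hzero
  rw [FdimerTheta_eq_mul, FdimerPhi_eq_mul]
  refine im_div_ne_zero_of_sq_add_sq_eq_zero ha hb hc hd ?_ ?_ hzero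
  · simpa [exp_re] using Real.cos_pos_of_mem_Ioo ⟨by linarith, by linarith⟩
  · simpa [exp_im] using Real.sin_pos_of_pos_of_lt_pi (by linarith) (by linarith)

/-- Lemma `notpar`:  if each of `a,b,c,d` is strictly less than the sum of
the other three, not both `a = b` and `c = d`, and `(θ₀, φ₀)` with
`θ₀ ∈ (0, π)` is a zero of `F` on the torus, then the ratio
`F_θ(θ₀,φ₀)/F_φ(θ₀,φ₀)` is not real. -/
theorem F_partials_ratio_not_real (a b c d θ₀ φ₀ : ℝ)
    (ha : 0 < a) (hb : 0 < b) (hc : 0 < c) (hd : 0 < d)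
    (h₁ : a < b + c + d) (h₂ : b < a + c + d)
    (h₃ : c < a + b + d) (h₄ : d < a + b + c)
    (hnd : ¬(a = b ∧ c = d)) (hθ₀ : θ₀ ∈ Set.Ioo 0 Real.pi)
    (hzero : Fdimer a b c d θ₀ φ₀ = 0) :
    (FdimerTheta a b c d θ₀ φ₀ / FdimerPhi a b c d θ₀ φ₀).im ≠ 0 :=
  F_partials_ratio_not_real_general a b c d θ₀ φ₀ ha hb hc hd hθ₀ hzero
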